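/- Let $G$ be a discrete group acting freely on a compact Hausdorff space $X$, and let $F \subseteq G \setminus \{1\}$ be finite. Then there exist $n \in \mathbb{Z}_{>0}$ and continuous functions $s_1, \ldots, s_n : X \to \mathbb{C}$ with $|s_k(x)| = 1$ for all $k$ and all $x \in X$, such that for all $x \in X$ and all $g \in F$, $\frac{1}{n}\sum_{k=1}^n s_k(x)\overline{s_k(g^{-1}x)} = 0$. -/

import Mathlib

/-!
For a single `g` and a point `x` with `g⁻¹ • x ≠ x`, there is a closed neighbourhood `C` of `x`
disjoint from `g⁻¹ • C`; by Urysohn there is a unimodular `σ` equal to `1` on `C` and `-1` on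
`g⁻¹ • C`, and the pair `(1, σ)` then has correlation `1 - 1 = 0` at every `(x', g)` with `x' ∈ C`.
Correlations are multiplicative under taking the family of all products `sⱼ tₖ`, so the sets of
pairs `(x, g)` on which some family cancels are closed under finite unions. Finitely many group
elements at a point, and then a finite subcover of the compact space, give the theorem.
-/

open Set Pointwise Topology

section Correlation

variable {R ι κ : Type*} [CommSemiring R] [StarRing R] [Fintype ι] [Fintype κ]

theorem Fintype.sum_prod_mul_mul_star_mul (a b : ι → R) (c d : κ → R) :
    ∑ p : ι × κ, a p.1 * c p.2 * star (b p.1 * d p.2) =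
      (∑ i, a i * star (b i)) * ∑ j, c j * star (d j) := by
  rw [Finset.sum_mul_sum, Fintype.sum_prod_type]
  refine Finset.sum_congr rfl fun i _ => Finset.sum_congr rfl fun j _ => ?_
  rw [star_mul']
  ring

end Correlation

theorem exists_unimodular_eqOn_one_eqOn_neg_one {X : Type*} [TopologicalSpace X] [NormalSpace X]
    {s t : Set X} (hs : IsClosed s) (ht : IsClosed t) (hst : Disjoint s t) :
    ∃ σ : C(X, ℂ), (∀ y, ‖σ y‖ = 1) ∧ EqOn σ 1 s ∧ EqOn σ (-1) t := by
  obtain ⟨f, hf0, hf1, -⟩ := exists_continuous_zero_one_of_isClosed hs ht hst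
  refine ⟨⟨fun y => Complex.exp ((Real.pi * f y : ℝ) * Complex.I), by fun_prop⟩,
    fun y => Complex.norm_exp_ofReal_mul_I _, fun y hy => ?_, fun y hy => ?_⟩
  · simp [hf0 hy]
  · simp [hf1 hy, Complex.exp_pi_mul_I]

theorem exists_isClosed_mem_nhds_disjoint_smul {G X : Type*} [Group G] [TopologicalSpace X]
    [T3Space X] [MulAction G X] [ContinuousConstSMul G X] {g : G} {x : X} (h : g • x ≠ x) :
    ∃ C ∈ 𝓝 x, IsClosed C ∧ Disjoint C (g • C) := by
  obtain ⟨U, V, hU, hV, hxU, hgxV, hUV⟩ := t2_separation h.symm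
  have hnhds : U ∩ g⁻¹ • V ∈ 𝓝 x :=
    (hU.inter (hV.smul g⁻¹)).mem_nhds ⟨hxU, mem_smul_set_iff_inv_smul_mem.2 (by simpa)⟩
  obtain ⟨C, hCx, hC, hCUV⟩ := exists_mem_nhds_isClosed_subset hnhds
  refine ⟨C, hCx, hC, hUV.mono (hCUV.trans inter_subset_left) ?_⟩
  calc g • C ⊆ g • (g⁻¹ • V) := smul_set_mono (hCUV.trans inter_subset_right)
    _ = V := smul_inv_smul g V

section Inessential

variable {G X : Type*} [Group G] [MulAction G X] [TopologicalSpace X]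

variable (G X) in
/-- The paper's "`F` is inessential on `U`" is `Inessential (U ×ˢ F)`. -/
def Inessential (S : Set (X × G)) : Prop :=
  ∃ (ι : Type) (_ : Fintype ι) (_ : Nonempty ι) (s : ι → C(X, ℂ)),
    (∀ k y, ‖s k y‖ = 1) ∧ ∀ p ∈ S, ∑ k, s k p.1 * starRingEnd ℂ (s k (p.2⁻¹ • p.1)) = 0

theorem Inessential.mono {S T : Set (X × G)} (hT : Inessential G X T) (hST : S ⊆ T) :
    Inessential G X S := by
  obtain ⟨ι, _, _, s, hs1, hs0⟩ := hT
  exact ⟨ι, _, ‹_›, s, hs1, fun p hp => hs0 p (hST hp)⟩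

theorem inessential_empty : Inessential G X ∅ :=
  ⟨Unit, inferInstance, inferInstance, fun _ => 1, fun _ _ => by simp, fun _ hp => hp.elim⟩

theorem Inessential.union {S T : Set (X × G)} (hS : Inessential G X S)
    (hT : Inessential G X T) : Inessential G X (S ∪ T) := by
  obtain ⟨ι, _, _, s, hs1, hs0⟩ := hS
  obtain ⟨κ, _, _, t, ht1, ht0⟩ := hT
  refine ⟨ι × κ, inferInstance, inferInstance, fun p => s p.1 * t p.2,
    fun p y => by simp [hs1, ht1], fun p hp => ?_⟩
  have hprod := Fintype.sum_prod_mul_mul_star_mul (fun i => s i p.1) (fun i => s i (p.2⁻¹ • p.1))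
    (fun j => t j p.1) (fun j => t j (p.2⁻¹ • p.1))
  simp only [ContinuousMap.mul_apply, starRingEnd_apply] at hprod hs0 ht0 ⊢
  rw [hprod]
  rcases hp with hp | hp
  · rw [hs0 p hp, zero_mul]
  · rw [ht0 p hp, mul_zero]

theorem Inessential.biUnion {α : Type*} (t : Finset α) {S : α → Set (X × G)}
    (hS : ∀ a ∈ t, Inessential G X (S a)) : Inessential G X (⋃ a ∈ t, S a) := by
  rw [← Finset.sup_set_eq_biUnion]
  exact Finset.sup_induction inessential_empty (fun _ h₁ _ h₂ => h₁.union h₂) hS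

theorem exists_mem_nhds_inessential_prod_singleton [T4Space X] [ContinuousConstSMul G X]
    {g : G} {x : X} (hgx : g⁻¹ • x ≠ x) : ∃ C ∈ 𝓝 x, Inessential G X (C ×ˢ {g}) := by
  obtain ⟨C, hCx, hC, hdisj⟩ := exists_isClosed_mem_nhds_disjoint_smul hgx
  obtain ⟨σ, hσ1, hσC, hσgC⟩ :=
    exists_unimodular_eqOn_one_eqOn_neg_one hC (hC.smul g⁻¹) hdisj
  refine ⟨C, hCx, Bool, inferInstance, inferInstance, fun b => if b then σ else 1,
    fun b y => by cases b <;> simp [hσ1], ?_⟩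
  rintro ⟨y, _⟩ ⟨hy, rfl⟩
  simp [hσC hy, hσgC (smul_mem_smul_set hy)]

theorem exists_mem_nhds_inessential_prod [T4Space X] [ContinuousConstSMul G X]
    {F : Finset G} {x : X} (hF : ∀ g ∈ F, g⁻¹ • x ≠ x) :
    ∃ U ∈ 𝓝 x, Inessential G X (U ×ˢ ↑F) := by
  choose! C hCx hC using fun g hg => exists_mem_nhds_inessential_prod_singleton (hF g hg)
  refine ⟨⋂ g ∈ F, C g, (Filter.biInter_finset_mem F).2 hCx,
    (Inessential.biUnion F hC).mono ?_⟩
  rintro ⟨y, g⟩ ⟨hy, hg⟩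
  exact mem_biUnion hg ⟨mem_iInter₂.1 hy g hg, rfl⟩

theorem IsCompact.inessential_prod {K : Set X} (hK : IsCompact K) {F : Set G}
    (h : ∀ x ∈ K, ∃ U ∈ 𝓝 x, Inessential G X (U ×ˢ F)) : Inessential G X (K ×ˢ F) := by
  choose! U hUx hU using h
  obtain ⟨t, htK, hKt⟩ := hK.elim_nhds_subcover U hUx
  refine (Inessential.biUnion t fun x hx => hU x (htK x hx)).mono ?_
  rintro ⟨y, g⟩ ⟨hy, hg⟩
  obtain ⟨x, hx, hyx⟩ := mem_iUnion₂.1 (hKt hy)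
  exact mem_biUnion hx ⟨hyx, hg⟩

end Inessential

/-- Let a discrete group `G` act freely and continuously on a compact Hausdorff
space `X`, and let `F ⊆ G \ {1}` be finite. Then there exist `n > 0` and continuous
functions `s₁, …, sₙ : X → ℂ` of constant modulus one such that
`(1/n) ∑_k s_k(x)·conj(s_k(g⁻¹x)) = 0` for all `x ∈ X` and all `g ∈ F`. -/
theorem free_action_unimodular_function_cancellation
    {G X : Type*} [Group G] [TopologicalSpace X] [CompactSpace X] [T2Space X]
    [MulAction G X] [ContinuousConstSMul G X]
    (hfree : ∀ (g : G) (x : X), g • x = x → g = 1)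
    (F : Finset G) (hF : (1 : G) ∉ F) :
    ∃ n : ℕ, 0 < n ∧ ∃ s : Fin n → C(X, ℂ),
      (∀ k y, ‖s k y‖ = 1) ∧
      ∀ (x : X), ∀ g ∈ F,
        (n : ℂ)⁻¹ * ∑ k, s k x * (starRingEnd ℂ) (s k (g⁻¹ • x)) = 0 := by
  have hmoved : ∀ x : X, ∀ g ∈ F, g⁻¹ • x ≠ x := fun x g hg hgx =>
    hF (inv_eq_one.1 (hfree _ x hgx) ▸ hg)
  obtain ⟨ι, _, _, s, hs1, hs0⟩ := isCompact_univ.inessential_prod fun x _ =>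
    exists_mem_nhds_inessential_prod (hmoved x)
  let e := (Fintype.equivFin ι).symm
  refine ⟨Fintype.card ι, Fintype.card_pos, fun k => s (e k), fun k => hs1 (e k),
    fun x g hg => mul_eq_zero_of_right _ ?_⟩
  rw [Fintype.sum_equiv e _ (fun i => s i x * starRingEnd ℂ (s i (g⁻¹ • x))) fun _ => rfl]
  exact hs0 (x, g) ⟨mem_univ x, hg⟩
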